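/- arXiv:2206.00107 — 3 statements merged into one kernel-verified Lean document; each statement's English description precedes it below -/
import Mathlib

section
/- With V the isometry from ℂ^d to (ℂ^d)^{⊗(d-1)} defined by V := (1/√((d-1)!)) Σ_{π∈S_d} sgn(π) ⟨π(1)| ⊗ |π(2)⟩⊗…⊗|π(d)⟩, for every U ∈ SU(d) one has V† U^{⊗(d-1)} V = Ū, where Ū is the entrywise complex conjugate of U in the standard basis. -/
open Matrix

/-- The isometry `V : ℂ^d → (ℂ^d)^{⊗(d-1)}` (here `d = n+1`), given by
`V = (1/√((d-1)!)) Σ_{π ∈ S_d} sgn(π) ⟨π(1)| ⊗ |π(2)⟩ ⊗ ⋯ ⊗ |π(d)⟩`. -/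
noncomputable def antisymIsometry (n : ℕ) :
    Matrix (Fin n → Fin (n + 1)) (Fin (n + 1)) ℂ :=
  Matrix.of fun g j => ((Real.sqrt (n.factorial) : ℂ))⁻¹ *
    ∑ π : Equiv.Perm (Fin (n + 1)),
      if j = π 0 ∧ ∀ i : Fin n, g i = π i.succ
      then ((Equiv.Perm.sign π : ℤ) : ℂ) else 0

/-- The tensor power `U^{⊗(d-1)}` acting on `(ℂ^d)^{⊗(d-1)}` (here `d = n+1`). -/
def tensorPow' (n : ℕ) (U : Matrix (Fin (n + 1)) (Fin (n + 1)) ℂ) :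
    Matrix (Fin n → Fin (n + 1)) (Fin n → Fin (n + 1)) ℂ :=
  Matrix.of fun f g => ∏ i : Fin n, U (f i) (g i)

/-!
Write `V = c • ∑_π sgn π · E_{π ∘ succ, π 0}` with `c² = 1/n!`. Then the `(j, k)` entry
of `V† U^{⊗n} V` is
`(1/n!) ∑_{σ 0 = k} ∑_{π 0 = j} sgn π sgn σ ∏_i U (π (i+1)) (σ (i+1))`.
Substituting `π = τ σ`, every inner sum becomes the cofactor expansion
`∑_{τ k = j} sgn τ ∏_{m ≠ k} U (τ m) m = adj(U)_{k j}`, independently of `σ`, and the `n!`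
permutations with `σ 0 = k` cancel the prefactor. Finally `adj U = det U • U⁻¹ = U†` for
`U ∈ SU(d)`, whose `(k, j)` entry is `conj (U j k)`.
-/

open Finset Equiv Matrix

section
variable {ι α : Type*} [Fintype ι] [DecidableEq ι] [CommRing α]

theorem Matrix.adjugate_apply_eq_sum_perm (A : Matrix ι ι α) (i j : ι) :
    A.adjugate i j =
      ∑ τ : Perm ι with τ i = j, (Perm.sign τ : α) * ∏ m ∈ univ.erase i, A (τ m) m := by
  rw [adjugate_apply, det_apply, sum_filter]
  refine sum_congr rfl fun τ _ => ?_
  rw [Units.smul_def, zsmul_eq_mul]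
  split_ifs with h
  · rw [← mul_prod_erase univ _ (mem_univ i), updateRow_apply, if_pos h, Pi.single_eq_same,
      one_mul]
    congr 1
    refine prod_congr rfl fun m hm => ?_
    rw [updateRow_apply, if_neg (fun h' => ne_of_mem_erase hm (τ.injective (h'.trans h.symm)))]
  · refine mul_eq_zero_of_right _ (prod_eq_zero (mem_univ (τ.symm j)) ?_)
    rw [updateRow_apply, if_pos (τ.apply_symm_apply j), Pi.single_eq_of_ne]
    rintro rfl
    exact h (τ.apply_symm_apply j)

theorem Matrix.adjugate_eq_star_of_mem_specialUnitaryGroup [StarRing α] {U : Matrix ι ι α}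
    (hU : U ∈ specialUnitaryGroup ι α) : U.adjugate = star U := by
  obtain ⟨hunitary, hdet⟩ := mem_specialUnitaryGroup_iff.1 hU
  calc U.adjugate = star U * U * U.adjugate := by
        rw [Unitary.star_mul_self_of_mem hunitary, one_mul]
    _ = star U := by rw [mul_assoc, mul_adjugate, hdet, one_smul, mul_one]

end

theorem Fin.prod_perm_succ_eq_prod_erase {M : Type*} [CommMonoid M] {n : ℕ}
    (σ : Perm (Fin (n + 1))) (f : Fin (n + 1) → M) :
    ∏ i : Fin n, f (σ i.succ) = ∏ m ∈ univ.erase (σ 0), f m := by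
  have : univ.erase (σ 0) = univ.map ((Fin.succEmb n).trans σ.toEmbedding) := by
    ext m
    simp [← Equiv.eq_symm_apply, Fin.exists_succ_eq]
  rw [this, prod_map]
  rfl

theorem Matrix.sum_sign_mul_prod_succ_eq_adjugate {R : Type*} [CommRing R] {n : ℕ}
    (A : Matrix (Fin (n + 1)) (Fin (n + 1)) R) (σ : Perm (Fin (n + 1))) (j : Fin (n + 1)) :
    ∑ π : Perm (Fin (n + 1)) with π 0 = j,
        ((Perm.sign π * Perm.sign σ : ℤˣ) : R) * ∏ i : Fin n, A (π i.succ) (σ i.succ)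
      = A.adjugate (σ 0) j := by
  rw [adjugate_apply_eq_sum_perm]
  symm
  refine sum_equiv (Equiv.mulRight σ) (by simp) fun τ _ => ?_
  simp only [coe_mulRight, Perm.mul_apply, map_mul, mul_assoc, Int.units_mul_self, mul_one]
  rw [Fin.prod_perm_succ_eq_prod_erase σ fun m => A (τ m) m]

theorem Equiv.Perm.card_filter_apply_zero_eq (n : ℕ) (k : Fin (n + 1)) :
    #{σ : Perm (Fin (n + 1)) | σ 0 = k} = n.factorial := by
  rw [card_filter, ← Perm.decomposeFin.symm.sum_comp, Fintype.sum_prod_type]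
  simp [Perm.decomposeFin_symm_apply_zero, Fintype.card_perm]

theorem antisymIsometry_eq_sum (n : ℕ) :
    antisymIsometry n = (√(n.factorial : ℝ))⁻¹ •
      ∑ π : Perm (Fin (n + 1)), single (⇑π ∘ Fin.succ) (π 0) (Perm.sign π : ℂ) := by
  ext g j
  simp [antisymIsometry, Matrix.sum_apply, single_apply, funext_iff, eq_comm, and_comm]

theorem conjTranspose_antisymIsometry_mul_mul_apply (n : ℕ)
    (M : Matrix (Fin n → Fin (n + 1)) (Fin n → Fin (n + 1)) ℂ) (j k : Fin (n + 1)) :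
    ((antisymIsometry n)ᴴ * M * antisymIsometry n) j k
      = (n.factorial : ℂ)⁻¹ * ∑ σ : Perm (Fin (n + 1)) with σ 0 = k,
          ∑ π : Perm (Fin (n + 1)) with π 0 = j,
            ((Perm.sign π * Perm.sign σ : ℤˣ) : ℂ) * M (⇑π ∘ Fin.succ) (⇑σ ∘ Fin.succ) := by
  have hc :
      ((√(n.factorial : ℝ) : ℂ))⁻¹ * ((√(n.factorial : ℝ) : ℂ))⁻¹ = (n.factorial : ℂ)⁻¹ := by
    rw [← mul_inv, ← Complex.ofReal_mul, Real.mul_self_sqrt (Nat.cast_nonneg _),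
      Complex.ofReal_natCast]
  rw [antisymIsometry_eq_sum]
  simp only [conjTranspose_smul, conjTranspose_sum, star_trivial, Matrix.smul_mul,
    Matrix.mul_smul, Matrix.sum_mul, Matrix.mul_sum, conjTranspose_single, single_mul_mul_single]
  simp only [star_intCast, Matrix.smul_apply, Matrix.sum_apply, single_apply, Complex.real_smul,
    Complex.ofReal_inv, Units.val_mul, Int.cast_mul, sum_filter]
  rw [← hc, mul_assoc, ← mul_sum]
  congr 2
  refine sum_congr rfl fun σ _ => ?_
  split_ifs with h <;> simp [h, mul_comm, mul_left_comm]

/-- For every `U ∈ SU(d)` (with `d = n+1`), `V† U^{⊗(d-1)} V = Ū`, the entrywise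
complex conjugate of `U` in the standard basis. -/
theorem antisymIsometry_conjugation (n : ℕ) (U : Matrix (Fin (n + 1)) (Fin (n + 1)) ℂ)
    (hU : U ∈ Matrix.unitaryGroup (Fin (n + 1)) ℂ) (hdet : U.det = 1) :
    (antisymIsometry n)ᴴ * tensorPow' n U * antisymIsometry n
      = U.map (starRingEnd ℂ) := by
  ext j k
  have hinner : ∀ σ ∈ ({σ | σ 0 = k} : Finset (Perm (Fin (n + 1)))),
      ∑ π : Perm (Fin (n + 1)) with π 0 = j, ((Perm.sign π * Perm.sign σ : ℤˣ) : ℂ) *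
        tensorPow' n U (⇑π ∘ Fin.succ) (⇑σ ∘ Fin.succ) = starRingEnd ℂ (U j k) := by
    intro σ hσ
    obtain rfl := (mem_filter.1 hσ).2
    calc _ = U.adjugate (σ 0) j := sum_sign_mul_prod_succ_eq_adjugate U σ j
      _ = starRingEnd ℂ (U j (σ 0)) := by
        rw [adjugate_eq_star_of_mem_specialUnitaryGroup ⟨hU, hdet⟩]; rfl
  rw [conjTranspose_antisymIsometry_mul_mul_apply, sum_congr rfl hinner, sum_const,
    Perm.card_filter_apply_zero_eq, nsmul_eq_mul,
    inv_mul_cancel_left₀ (Nat.cast_ne_zero.2 n.factorial_ne_zero), map_apply]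
end

section
/- For every partition λ of n with at most d rows, with n ≤ d, the ratio c(λ) := (Σ_{β ∈ λ} m_β)/m_λ satisfies c(λ) ≤ n/(d−n+1), with equality for λ = [1^{×n}]; here the sum is over all partitions β obtained from λ by removing one corner box, and m_μ is the dimension of the GL(d)-irreducible representation labeled by μ (number of semistandard Young tableaux of shape μ with entries ≤ d). -/
open Finset

/-- The number of semistandard Young tableaux of shape `μ` with entries in `{0, …, d-1}`
(equivalently, entries in `{1, …, d}`); this is the dimension `m_μ` of the `GL(d)`
irreducible representation labeled by `μ`. -/
noncomputable def dimGL (d : ℕ) (μ : YoungDiagram) : ℕ :=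
  Nat.card {T : SemistandardYoungTableau μ // ∀ i j : ℕ, (i, j) ∈ μ → T i j < d}

/-- The set of Young diagrams obtained from `μ` by removing a single (corner) box. -/
def oneBoxRemovals (μ : YoungDiagram) : Set YoungDiagram :=
  {β | β.cells ⊆ μ.cells ∧ β.cells.card + 1 = μ.cells.card}

/-- The ratio `c(λ) := (Σ_{β ∈ λ} m_β) / m_λ`. -/
noncomputable def cRatio (d : ℕ) (μ : YoungDiagram) : ℚ :=
  (∑ᶠ β ∈ oneBoxRemovals μ, (dimGL d β : ℚ)) / (dimGL d μ : ℚ)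

/-- The column Young diagram `[1^{×n}]`, with `n` rows of length 1. -/
def columnDiagram (n : ℕ) : YoungDiagram :=
  YoungDiagram.ofRowLens (List.replicate n 1) (List.sortedGE_iff_pairwise.2 (List.pairwise_replicate.2 (by simp)))

/-!
The dimensions `m_μ = dimGL d μ` satisfy the content identity
`∑_{c corner of μ} (d + j_c - i_c) m_{μ - c} = |μ| m_μ`, proved by induction on `d`. By the
branching rule `m^{(d+1)}_μ = ∑_ν m^{(d)}_ν`, over the `ν` for which `μ / ν` is a horizontal strip
(the cells holding the largest entry), both sides expand in the `m^{(d)}_ν`, and their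
coefficients agree by an identity between the column lengths of `μ` and `ν`.
A corner of a diagram with `n` cells has `i_c ≤ n - 1`, so the identity gives
`(d - n + 1) ∑ m_{μ - c} ≤ n m_μ`; the column has a single corner, with `i_c = n - 1`, `j_c = 0`.
-/

namespace YoungDiagram

open scoped Classical

theorem le_iff_colLen_le {ν μ : YoungDiagram} : ν ≤ μ ↔ ∀ j, ν.colLen j ≤ μ.colLen j := by
  refine ⟨fun h j => ?_, fun h c hc => ?_⟩
  · by_contra! hlt
    have := mem_iff_lt_colLen.1 (h (mem_iff_lt_colLen.2 hlt))
    omega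
  · exact mem_iff_lt_colLen.2 ((mem_iff_lt_colLen.1 hc).trans_le (h c.2))

theorem colLen_eq_of_mem_iff {μ : YoungDiagram} {j k : ℕ} (h : ∀ i, (i, j) ∈ μ ↔ i < k) :
    μ.colLen j = k := by
  have h1 := mem_iff_lt_colLen.symm.trans (h k)
  have h2 := mem_iff_lt_colLen.symm.trans (h (μ.colLen j))
  omega

theorem rowLen_le_rowLen {ν μ : YoungDiagram} (h : ν ≤ μ) (i : ℕ) : ν.rowLen i ≤ μ.rowLen i := by
  by_contra! hlt
  have := mem_iff_lt_rowLen.1 (h (mem_iff_lt_rowLen.2 hlt))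
  omega

theorem colLen_pos_iff {μ : YoungDiagram} {j : ℕ} : 0 < μ.colLen j ↔ j < μ.rowLen 0 := by
  rw [← mem_iff_lt_colLen, ← mem_iff_lt_rowLen]

theorem colLen_le_colLen_zero (μ : YoungDiagram) (j : ℕ) : μ.colLen j ≤ μ.colLen 0 :=
  μ.colLen_anti 0 j (Nat.zero_le j)

theorem card_cells_eq_sum_colLen (μ : YoungDiagram) {W : ℕ} (hW : μ.rowLen 0 ≤ W) :
    #μ.cells = ∑ j ∈ range W, μ.colLen j := by
  rw [card_eq_sum_card_fiberwise (f := Prod.snd) (t := range W)]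
  · exact sum_congr rfl fun j _ => μ.colLen_eq_card.symm
  · intro c hc
    have := mem_iff_lt_rowLen.1 (μ.up_left_mem (Nat.zero_le c.1) le_rfl ((mem_cells c).1 hc))
    rw [coe_range, Set.mem_Iio]
    omega

theorem colLen_le_card_cells (μ : YoungDiagram) (j : ℕ) : μ.colLen j ≤ #μ.cells := by
  rw [μ.colLen_eq_card]
  exact card_le_card fun c hc => (mem_cells c).2 (mem_col_iff.1 hc).1

theorem zero_zero_mem_iff_ne_bot {μ : YoungDiagram} : (0, 0) ∈ μ ↔ μ ≠ ⊥ := by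
  refine ⟨fun h hμ => notMem_bot _ (hμ ▸ h), fun hμ => ?_⟩
  obtain ⟨c, hc⟩ : μ.cells.Nonempty :=
    nonempty_iff_ne_empty.2 fun h => hμ (YoungDiagram.ext (h.trans cells_bot.symm))
  exact μ.up_left_mem (Nat.zero_le _) (Nat.zero_le _) ((mem_cells c).1 hc)

/-- The skew shape `μ / ν` is a horizontal strip. -/
def IsHorizontalStrip (ν μ : YoungDiagram) : Prop :=
  ν ≤ μ ∧ ∀ j, μ.colLen j ≤ ν.colLen j + 1

theorem isHorizontalStrip_iff_colLen {ν μ : YoungDiagram} :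
    ν.IsHorizontalStrip μ ↔ ∀ j, ν.colLen j ≤ μ.colLen j ∧ μ.colLen j ≤ ν.colLen j + 1 := by
  rw [IsHorizontalStrip, le_iff_colLen_le, forall_and]

theorem finite_setOf_le (μ : YoungDiagram) : {ν : YoungDiagram | ν ≤ μ}.Finite := by
  refine ((Set.finite_Iic μ.cells).preimage fun ν _ ν' _ h => YoungDiagram.ext h).subset ?_
  exact fun ν hν => cells_subset_iff.2 hν

noncomputable def subdiagrams (μ : YoungDiagram) : Finset YoungDiagram :=
  (finite_setOf_le μ).toFinset

@[simp] theorem mem_subdiagrams {μ ν : YoungDiagram} : ν ∈ μ.subdiagrams ↔ ν ≤ μ :=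
  Set.Finite.mem_toFinset _

noncomputable def stripRemovals (μ : YoungDiagram) : Finset YoungDiagram :=
  μ.subdiagrams.filter (IsHorizontalStrip · μ)

@[simp] theorem mem_stripRemovals {μ ν : YoungDiagram} :
    ν ∈ μ.stripRemovals ↔ IsHorizontalStrip ν μ := by
  rw [stripRemovals, mem_filter, mem_subdiagrams]
  exact and_iff_right_of_imp And.left

theorem stripRemovals_eq_filter {ρ μ : YoungDiagram} (h : ρ ≤ μ) :
    ρ.stripRemovals = μ.subdiagrams.filter (IsHorizontalStrip · ρ) := by
  ext ν
  rw [mem_stripRemovals, mem_filter, mem_subdiagrams]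
  exact ⟨fun hν => ⟨hν.1.trans h, hν⟩, And.right⟩

end YoungDiagram

abbrev BoundedTableau (d : ℕ) (μ : YoungDiagram) : Type :=
  {T : SemistandardYoungTableau μ // ∀ i j : ℕ, (i, j) ∈ μ → T i j < d}

instance (d : ℕ) (μ : YoungDiagram) : Finite (BoundedTableau d μ) := by
  refine Finite.of_injective
    (fun T (c : μ.cells) => (⟨T.1 c.1.1 c.1.2, T.2 _ _ ((μ.mem_cells _).1 c.2)⟩ : Fin d)) ?_
  intro T T' h
  ext i j
  by_cases hc : (i, j) ∈ μ
  · exact congrArg Fin.val (congrFun h ⟨(i, j), (μ.mem_cells _).2 hc⟩)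
  · rw [T.1.zeros hc, T'.1.zeros hc]

namespace SemistandardYoungTableau

open YoungDiagram

variable {μ : YoungDiagram}

theorem entry_le_of_le (T : SemistandardYoungTableau μ) {i1 i2 j1 j2 : ℕ}
    (hi : i1 ≤ i2) (hj : j1 ≤ j2) (h : (i2, j2) ∈ μ) : T i1 j1 ≤ T i2 j2 :=
  (T.col_weak hi (μ.up_left_mem le_rfl hj h)).trans (T.row_weak_of_le hj h)

def belowShape (T : SemistandardYoungTableau μ) (d : ℕ) : YoungDiagram where
  cells := μ.cells.filter fun c => T c.1 c.2 < d
  isLowerSet c₂ c₁ hle hc₂ := by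
    simp only [coe_filter, Set.mem_ofPred_eq, mem_cells] at hc₂ ⊢
    exact ⟨μ.up_left_mem hle.1 hle.2 hc₂.1,
      (T.entry_le_of_le hle.1 hle.2 hc₂.1).trans_lt hc₂.2⟩

theorem mem_belowShape {T : SemistandardYoungTableau μ} {d : ℕ} {c : ℕ × ℕ} :
    c ∈ T.belowShape d ↔ c ∈ μ ∧ T c.1 c.2 < d := by
  rw [← mem_cells]
  simp [belowShape]

theorem isHorizontalStrip_belowShape (T : SemistandardYoungTableau μ) {d : ℕ}
    (hT : ∀ i j, (i, j) ∈ μ → T i j < d + 1) : (T.belowShape d).IsHorizontalStrip μ := by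
  refine ⟨fun c hc => (mem_belowShape.1 hc).1, fun j => ?_⟩
  set K := (T.belowShape d).colLen j
  by_contra! hK
  have hK1 : (K + 1, j) ∈ μ := mem_iff_lt_colLen.2 (by omega)
  have hK0 : ¬ T K j < d := fun h =>
    (lt_irrefl K) (mem_iff_lt_colLen.1 (mem_belowShape.2 ⟨μ.up_left_mem (by omega) le_rfl hK1, h⟩))
  have := T.col_strict (Nat.lt_add_one K) hK1
  have := hT _ _ hK1
  omega

def restrictBelow (T : SemistandardYoungTableau μ) (d : ℕ) :
    SemistandardYoungTableau (T.belowShape d) where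
  entry i j := if (i, j) ∈ T.belowShape d then T i j else 0
  row_weak' hj hc := by
    rw [if_pos hc, if_pos ((T.belowShape d).up_left_mem le_rfl hj.le hc)]
    exact T.row_weak hj (mem_belowShape.1 hc).1
  col_strict' hi hc := by
    rw [if_pos hc, if_pos ((T.belowShape d).up_left_mem hi.le le_rfl hc)]
    exact T.col_strict hi (mem_belowShape.1 hc).1
  zeros' h := if_neg h

theorem restrictBelow_apply (T : SemistandardYoungTableau μ) (d i j : ℕ) :
    T.restrictBelow d i j = if (i, j) ∈ T.belowShape d then T i j else 0 := rfl

def fillStrip {ν : YoungDiagram} (S : SemistandardYoungTableau ν) (h : ν.IsHorizontalStrip μ)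
    {d : ℕ} (hS : ∀ i j, (i, j) ∈ ν → S i j < d) : SemistandardYoungTableau μ where
  entry i j := if (i, j) ∈ ν then S i j else if (i, j) ∈ μ then d else 0
  row_weak' {i j₁ j₂} hj hc := by
    by_cases h₂ : (i, j₂) ∈ ν
    · rw [if_pos (ν.up_left_mem le_rfl hj.le h₂), if_pos h₂]
      exact S.row_weak hj h₂
    · rw [if_neg h₂, if_pos hc]
      split_ifs with h₁ h₁'
      exacts [(hS _ _ h₁).le, le_rfl, (h₁' (μ.up_left_mem le_rfl hj.le hc)).elim]
  col_strict' {i₁ i₂ j} hi hc := by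
    by_cases h₂ : (i₂, j) ∈ ν
    · rw [if_pos (ν.up_left_mem hi.le le_rfl h₂), if_pos h₂]
      exact S.col_strict hi h₂
    · have h₁ : (i₁, j) ∈ ν := by
        have := h.2 j
        rw [mem_iff_lt_colLen] at hc h₂ ⊢
        omega
      rw [if_neg h₂, if_pos hc, if_pos h₁]
      exact hS _ _ h₁
  zeros' hc := by rw [if_neg fun h' => hc (h.1 h'), if_neg hc]

theorem fillStrip_apply {ν : YoungDiagram} (S : SemistandardYoungTableau ν)
    (h : ν.IsHorizontalStrip μ) {d : ℕ} (hS : ∀ i j, (i, j) ∈ ν → S i j < d) (i j : ℕ) :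
    S.fillStrip h hS i j = if (i, j) ∈ ν then S i j else if (i, j) ∈ μ then d else 0 := rfl

theorem restrictBelow_lt (T : SemistandardYoungTableau μ) (d : ℕ) :
    ∀ i j, (i, j) ∈ T.belowShape d → T.restrictBelow d i j < d := fun i j h => by
  rw [restrictBelow_apply, if_pos h]
  exact (mem_belowShape.1 h).2

theorem fillStrip_lt_succ {ν : YoungDiagram} (S : SemistandardYoungTableau ν)
    (h : ν.IsHorizontalStrip μ) {d : ℕ} (hS : ∀ i j, (i, j) ∈ ν → S i j < d) :
    ∀ i j, (i, j) ∈ μ → S.fillStrip h hS i j < d + 1 := fun i j hc => by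
  rw [fillStrip_apply]
  split_ifs with h'
  exacts [(hS _ _ h').trans d.lt_succ_self, d.lt_succ_self]

theorem fillStrip_restrictBelow (T : SemistandardYoungTableau μ) {d : ℕ}
    (hT : ∀ i j, (i, j) ∈ μ → T i j < d + 1) :
    (T.restrictBelow d).fillStrip (T.isHorizontalStrip_belowShape hT) (T.restrictBelow_lt d) =
      T := by
  ext i j
  rw [fillStrip_apply, restrictBelow_apply]
  by_cases h₁ : (i, j) ∈ T.belowShape d
  · rw [if_pos h₁, if_pos h₁]
  by_cases h₂ : (i, j) ∈ μ
  · have h₃ := hT i j h₂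
    have h₄ : ¬ T i j < d := fun h => h₁ (mem_belowShape.2 ⟨h₂, h⟩)
    rw [if_neg h₁, if_pos h₂]
    omega
  · rw [if_neg h₁, if_neg h₂, T.zeros h₂]

theorem belowShape_fillStrip {ν : YoungDiagram} (S : SemistandardYoungTableau ν)
    (h : ν.IsHorizontalStrip μ) {d : ℕ} (hS : ∀ i j, (i, j) ∈ ν → S i j < d) :
    (S.fillStrip h hS).belowShape d = ν := by
  ext ⟨i, j⟩
  rw [mem_cells, mem_cells, mem_belowShape, fillStrip_apply]
  by_cases hν : (i, j) ∈ ν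
  · rw [if_pos hν]
    exact iff_of_true ⟨h.1 hν, hS i j hν⟩ hν
  · refine iff_of_false (fun ⟨hμ, hlt⟩ => ?_) hν
    rw [if_neg hν, if_pos hμ] at hlt
    exact lt_irrefl d hlt

theorem restrictBelow_fillStrip_apply {ν : YoungDiagram} (S : SemistandardYoungTableau ν)
    (h : ν.IsHorizontalStrip μ) {d : ℕ} (hS : ∀ i j, (i, j) ∈ ν → S i j < d) (i j : ℕ) :
    (S.fillStrip h hS).restrictBelow d i j = S i j := by
  rw [restrictBelow_apply, belowShape_fillStrip, fillStrip_apply]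
  by_cases hν : (i, j) ∈ ν
  · rw [if_pos hν, if_pos hν]
  · rw [if_neg hν, S.zeros hν]

end SemistandardYoungTableau

open YoungDiagram SemistandardYoungTableau

theorem sigma_mk_eq_of_entry_eq {μ ν₁ ν₂ : YoungDiagram} {d : ℕ} (h₁ : ν₁ ∈ μ.stripRemovals)
    (h₂ : ν₂ ∈ μ.stripRemovals) (S₁ : BoundedTableau d ν₁) (S₂ : BoundedTableau d ν₂)
    (hν : ν₁ = ν₂) (hS : ∀ i j, S₁.1 i j = S₂.1 i j) :
    (⟨⟨ν₁, h₁⟩, S₁⟩ : Σ ν : μ.stripRemovals, BoundedTableau d ν) = ⟨⟨ν₂, h₂⟩, S₂⟩ := by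
  subst hν
  obtain rfl := Subtype.ext (SemistandardYoungTableau.ext hS)
  rfl

/-- Branching rule: in a tableau with entries `≤ d`, the cells with entry `d` form a horizontal
strip. -/
def boundedTableauSuccEquiv (d : ℕ) (μ : YoungDiagram) :
    BoundedTableau (d + 1) μ ≃ Σ ν : μ.stripRemovals, BoundedTableau d ν where
  toFun T := ⟨⟨T.1.belowShape d, mem_stripRemovals.2 (T.1.isHorizontalStrip_belowShape T.2)⟩,
    ⟨T.1.restrictBelow d, T.1.restrictBelow_lt d⟩⟩
  invFun p := ⟨p.2.1.fillStrip (mem_stripRemovals.1 p.1.2) p.2.2, fillStrip_lt_succ _ _ _⟩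
  left_inv T := Subtype.ext (T.1.fillStrip_restrictBelow T.2)
  right_inv := fun ⟨⟨_, hν⟩, S⟩ => sigma_mk_eq_of_entry_eq _ _ _ _
    (belowShape_fillStrip S.1 (mem_stripRemovals.1 hν) S.2)
    (restrictBelow_fillStrip_apply S.1 (mem_stripRemovals.1 hν) S.2)

theorem dimGL_succ (d : ℕ) (μ : YoungDiagram) :
    dimGL (d + 1) μ = ∑ ν ∈ μ.stripRemovals, dimGL d ν := by
  rw [dimGL, Nat.card_congr (boundedTableauSuccEquiv d μ), Nat.card_sigma,
    ← sum_coe_sort μ.stripRemovals]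
  rfl

open scoped Classical in
theorem dimGL_zero (μ : YoungDiagram) : dimGL 0 μ = if μ = ⊥ then 1 else 0 := by
  split_ifs with hμ
  · subst hμ
    refine Nat.card_eq_one_iff_exists.2 ⟨⟨highestWeight ⊥, fun i j h => (notMem_bot _ h).elim⟩,
      fun T => Subtype.ext (SemistandardYoungTableau.ext fun i j => ?_)⟩
    rw [T.1.zeros (notMem_bot _), (highestWeight ⊥).zeros (notMem_bot _)]
  · have : IsEmpty (BoundedTableau 0 μ) :=
      ⟨fun T => Nat.not_lt_zero _ (T.2 0 0 (zero_zero_mem_iff_ne_bot.2 hμ))⟩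
    exact Nat.card_of_isEmpty

theorem dimGL_pos {d : ℕ} {μ : YoungDiagram} (h : μ.colLen 0 ≤ d) : 0 < dimGL d μ := by
  have : Nonempty (BoundedTableau d μ) := ⟨⟨highestWeight μ, fun i j hc => by
    rw [highestWeight_apply, if_pos hc]
    exact (mem_iff_lt_colLen.1 hc).trans_le ((μ.colLen_le_colLen_zero j).trans h)⟩⟩
  exact Nat.card_pos

namespace YoungDiagram

def corners (μ : YoungDiagram) : Finset (ℕ × ℕ) :=
  μ.cells.filter fun c => (c.1 + 1, c.2) ∉ μ ∧ (c.1, c.2 + 1) ∉ μ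

theorem mem_corners {μ : YoungDiagram} {c : ℕ × ℕ} :
    c ∈ μ.corners ↔ c ∈ μ ∧ (c.1 + 1, c.2) ∉ μ ∧ (c.1, c.2 + 1) ∉ μ := by
  rw [corners, mem_filter, mem_cells]

theorem mk_mem_corners_iff {μ : YoungDiagram} {i j : ℕ} :
    (i, j) ∈ μ.corners ↔ i + 1 = μ.colLen j ∧ μ.colLen (j + 1) < μ.colLen j := by
  have := μ.colLen_anti j (j + 1) j.le_succ
  simp only [mem_corners, mem_iff_lt_colLen]
  omega

def eraseCorner (μ : YoungDiagram) (c : ℕ × ℕ) : YoungDiagram :=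
  if h : c ∈ μ.corners then
    { cells := μ.cells.erase c
      isLowerSet := fun c₂ c₁ hle hc₂ => by
        simp only [coe_erase, Set.mem_sdiff, mem_coe, mem_cells, Set.mem_singleton_iff] at hc₂ ⊢
        refine ⟨μ.up_left_mem hle.1 hle.2 hc₂.1, ?_⟩
        rintro rfl
        obtain ⟨-, hdown, hright⟩ := mem_corners.1 h
        rcases hle.1.lt_or_eq with h₁ | h₁
        · exact hdown (μ.up_left_mem h₁ hle.2 hc₂.1)
        rcases hle.2.lt_or_eq with h₂ | h₂
        · exact hright (μ.up_left_mem h₁.le h₂ hc₂.1)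
        · exact hc₂.2 (Prod.ext h₁ h₂).symm }
  else μ

theorem cells_eraseCorner {μ : YoungDiagram} {c : ℕ × ℕ} (h : c ∈ μ.corners) :
    (μ.eraseCorner c).cells = μ.cells.erase c := by
  rw [eraseCorner, dif_pos h]

theorem eraseCorner_le (μ : YoungDiagram) (c : ℕ × ℕ) : μ.eraseCorner c ≤ μ := by
  by_cases h : c ∈ μ.corners
  · rw [← cells_subset_iff, cells_eraseCorner h]
    exact erase_subset c μ.cells
  · rw [eraseCorner, dif_neg h]

theorem colLen_eraseCorner {μ : YoungDiagram} {c : ℕ × ℕ} (h : c ∈ μ.corners) (j : ℕ) :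
    (μ.eraseCorner c).colLen j = if j = c.2 then μ.colLen j - 1 else μ.colLen j := by
  obtain ⟨i₀, j₀⟩ := c
  have hc := mk_mem_corners_iff.1 h
  refine colLen_eq_of_mem_iff fun i => ?_
  rw [← mem_cells, cells_eraseCorner h, mem_erase, mem_cells, mem_iff_lt_colLen, ne_eq,
    Prod.mk.injEq]
  split_ifs with hj
  · subst hj
    omega
  · tauto

theorem eraseCorner_injOn (μ : YoungDiagram) : Set.InjOn μ.eraseCorner μ.corners := by
  intro x hx y hy h
  have h' := congrArg cells h
  rw [cells_eraseCorner hx, cells_eraseCorner hy] at h'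
  by_contra hne
  have hx' : x ∈ μ.cells.erase y := mem_erase.2 ⟨hne, (mem_cells x).2 (mem_corners.1 hx).1⟩
  rw [← h'] at hx'
  exact notMem_erase x _ hx'

open scoped Classical in
noncomputable def addCell (ν : YoungDiagram) (c : ℕ × ℕ) : YoungDiagram :=
  if h : IsLowerSet (↑(insert c ν.cells) : Set (ℕ × ℕ)) then ⟨insert c ν.cells, h⟩ else ν

theorem cells_addCell {ν : YoungDiagram} {c : ℕ × ℕ}
    (h : IsLowerSet (↑(insert c ν.cells) : Set (ℕ × ℕ))) :
    (ν.addCell c).cells = insert c ν.cells := by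
  rw [addCell, dif_pos h]

theorem cells_addCell_of_mem_corners {ν : YoungDiagram} {c : ℕ × ℕ} (hc : c ∉ ν)
    (h : c ∈ (ν.addCell c).corners) : (ν.addCell c).cells = insert c ν.cells := by
  unfold addCell at h ⊢
  split_ifs at h ⊢
  · rfl
  · exact (hc (mem_corners.1 h).1).elim

theorem addCell_eraseCorner {ρ : YoungDiagram} {c : ℕ × ℕ} (h : c ∈ ρ.corners) :
    (ρ.eraseCorner c).addCell c = ρ := by
  have hins : insert c (ρ.eraseCorner c).cells = ρ.cells := by
    rw [cells_eraseCorner h, insert_erase ((mem_cells c).2 (mem_corners.1 h).1)]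
  apply YoungDiagram.ext
  rw [cells_addCell (by rw [hins]; exact ρ.isLowerSet), hins]

theorem eraseCorner_addCell {ν : YoungDiagram} {c : ℕ × ℕ} (hc : c ∉ ν)
    (h : c ∈ (ν.addCell c).corners) : (ν.addCell c).eraseCorner c = ν := by
  apply YoungDiagram.ext
  rw [cells_eraseCorner h, cells_addCell_of_mem_corners hc h,
    erase_insert fun h' => hc ((mem_cells c).1 h')]

end YoungDiagram

theorem sum_eq_sum_filter_range_of_mem_iff {M : Type*} [AddCommMonoid M] {s : Finset (ℕ × ℕ)}
    {P : ℕ → Prop} [DecidablePred P] {f : ℕ → ℕ} {W : ℕ} (hs : ∀ i j, (i, j) ∈ s ↔ i = f j ∧ P j)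
    (hW : ∀ j, P j → j < W) (w : ℕ × ℕ → M) :
    ∑ c ∈ s, w c = ∑ j ∈ (range W).filter P, w (f j, j) := by
  refine sum_nbij' Prod.snd (fun j => (f j, j)) (fun c hc => ?_) (fun j hj => ?_)
    (fun c hc => ?_) (fun j _ => rfl) (fun c hc => ?_)
  · have := (hs c.1 c.2).1 hc
    exact mem_filter.2 ⟨mem_range.2 (hW _ this.2), this.2⟩
  · exact (hs _ _).2 ⟨rfl, (mem_filter.1 hj).2⟩
  · exact Prod.ext ((hs c.1 c.2).1 hc).1.symm rfl
  · rw [← ((hs c.1 c.2).1 hc).1]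

section ColumnIdentity

open scoped Classical

variable (L N : ℕ → ℕ)

/- For the column lengths `L`, `N` of diagrams `ν ≤ μ`: `IsCornerCol L N j` says that the bottom
cell `c` of column `j` of `μ` is a corner and `μ - c` is a horizontal strip over `ν`;
`IsAddableCol L N j` says that the cell `c'` below column `j` of `ν` is addable and `μ` is a
horizontal strip over `ν + c'`. -/
def IsCornerCol (j : ℕ) : Prop :=
  N j < L j ∧ L (j + 1) < L j ∧ L j ≤ N j + 2 ∧ ∀ j', j' ≠ j → L j' ≤ N j' + 1

def IsAddableCol (j : ℕ) : Prop :=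
  N j < L j ∧ (j = 0 ∨ N j < N (j - 1)) ∧ L j ≤ N j + 2 ∧ ∀ j', j' ≠ j → L j' ≤ N j' + 1

variable {L N}

theorem eq_add_two_of_not_forall_le_add_one (hstrip : ¬ ∀ j, L j ≤ N j + 1) {j : ℕ}
    (h : L j ≤ N j + 2) (hne : ∀ j', j' ≠ j → L j' ≤ N j' + 1) : L j = N j + 2 := by
  push Not at hstrip
  obtain ⟨j₀, hj₀⟩ := hstrip
  by_cases hj : j₀ = j
  · subst hj
    omega
  · exact absurd (hne j₀ hj) (by omega)

theorem isCornerCol_iff_isAddableCol (hL : Antitone L) (hN : Antitone N)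
    (hstrip : ¬ ∀ j, L j ≤ N j + 1) {j : ℕ} : IsCornerCol L N j ↔ IsAddableCol L N j := by
  refine ⟨fun ⟨h₁, _, h₃, h₄⟩ => ⟨h₁, ?_, h₃, h₄⟩, fun ⟨h₁, _, h₃, h₄⟩ => ⟨h₁, ?_, h₃, h₄⟩⟩
  · have := eq_add_two_of_not_forall_le_add_one hstrip h₃ h₄
    rcases Nat.eq_zero_or_pos j with hj | hj
    · exact Or.inl hj
    · have := h₄ (j - 1) (by omega)
      have := hL (Nat.sub_le j 1)
      omega
  · have := eq_add_two_of_not_forall_le_add_one hstrip h₃ h₄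
    have := h₄ (j + 1) (by omega)
    have := hN (Nat.le_add_right j 1)
    omega

theorem sum_isCornerCol_of_not_strip (hL : Antitone L) (hN : Antitone N)
    (hstrip : ¬ ∀ j, L j ≤ N j + 1) (d : ℤ) (s : Finset ℕ) :
    ∑ j ∈ s.filter (IsCornerCol L N), (d + 2 + j - L j) =
      ∑ j ∈ s.filter (IsAddableCol L N), (d + j - N j) := by
  rw [filter_congr fun j _ => isCornerCol_iff_isAddableCol hL hN hstrip]
  refine sum_congr rfl fun j hj => ?_
  obtain ⟨-, -, h₃, h₄⟩ := (mem_filter.1 hj).2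
  rw [eq_add_two_of_not_forall_le_add_one hstrip h₃ h₄]
  push_cast
  ring

theorem filter_isCornerCol_of_strip (hstrip : ∀ j, L j ≤ N j + 1) (s : Finset ℕ) :
    s.filter (IsCornerCol L N) =
      (s.filter fun j => N j < L j).filter fun j => L (j + 1) < L j := by
  ext j
  have := hstrip j
  simp only [mem_filter, IsCornerCol]
  exact ⟨fun ⟨hj, h₀, h₁, _⟩ => ⟨⟨hj, h₀⟩, h₁⟩,
    fun ⟨⟨hj, h₀⟩, h₁⟩ => ⟨hj, h₀, h₁, by omega, fun j' _ => hstrip j'⟩⟩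

theorem filter_isAddableCol_of_strip (hstrip : ∀ j, L j ≤ N j + 1) (s : Finset ℕ) :
    s.filter (IsAddableCol L N) =
      (s.filter fun j => N j < L j).filter fun j => j = 0 ∨ N j < N (j - 1) := by
  ext j
  have := hstrip j
  simp only [mem_filter, IsAddableCol]
  exact ⟨fun ⟨hj, h₀, h₁, _⟩ => ⟨⟨hj, h₀⟩, h₁⟩,
    fun ⟨⟨hj, h₀⟩, h₁⟩ => ⟨hj, h₀, h₁, by omega, fun j' _ => hstrip j'⟩⟩

/- Within the strip, `j ↦ j - 1` maps the columns that are not addable onto the columns that are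
not corners, and `d + j - N j` goes up by one along this map. -/
theorem sum_filter_not_addable_eq (hL : Antitone L) (hN : Antitone N)
    (hstrip : ∀ j, L j ≤ N j + 1) {W : ℕ} (hW : ∀ j, W ≤ j → L j = 0) (d : ℤ) :
    ∑ j ∈ ((range W).filter fun j => N j < L j).filter (fun j => ¬ (j = 0 ∨ N j < N (j - 1))),
        (d + j - N j) =
      ∑ j ∈ ((range W).filter fun j => N j < L j).filter (fun j => ¬ L (j + 1) < L j),
        (d + j - N j + 1) := by
  have hmem : ∀ j, j ∈ (range W).filter (fun j => N j < L j) ↔ N j < L j := fun j => by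
    have := hW j
    simp only [mem_filter, mem_range]
    omega
  refine sum_nbij' (· - 1) (· + 1) (fun j hj => ?_) (fun j hj => ?_) (fun j hj => ?_)
    (fun j _ => rfl) (fun j hj => ?_)
  all_goals
    simp only [mem_filter, hmem, not_or, not_lt] at hj ⊢
    have := hstrip j
  · have := hstrip (j - 1)
    have := hL (Nat.sub_le j 1)
    refine ⟨by omega, ?_⟩
    rw [Nat.sub_add_cancel (by omega)]
    omega
  · have := hstrip (j + 1)
    have := hN (Nat.le_add_right j 1)
    have := hL (Nat.le_add_right j 1)
    simp only [Nat.add_sub_cancel]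
    omega
  · omega
  · have := hN (Nat.sub_le j 1)
    push_cast [Nat.cast_sub (show 1 ≤ j by omega)]
    omega

theorem sum_isCornerCol_of_strip (hL : Antitone L) (hN : Antitone N) (hNL : ∀ j, N j ≤ L j)
    (hstrip : ∀ j, L j ≤ N j + 1) {W : ℕ} (hW : ∀ j, W ≤ j → L j = 0) (d : ℤ) :
    ∑ j ∈ (range W).filter (IsCornerCol L N), (d + 2 + j - L j) =
      ∑ j ∈ (range W).filter (IsAddableCol L N), (d + j - N j) +
        ∑ j ∈ range W, ((L j : ℤ) - N j) := by
  have hshift := sum_filter_not_addable_eq hL hN hstrip hW d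
  set S := (range W).filter fun j => N j < L j
  have hcard : ∑ j ∈ range W, ((L j : ℤ) - N j) = #S := by
    rw [card_filter]
    push_cast
    refine sum_congr rfl fun j _ => ?_
    have := hstrip j
    have := hNL j
    split_ifs <;> omega
  have hcorner : ∀ j ∈ S.filter fun j => L (j + 1) < L j, d + 2 + j - L j = d + j - N j + 1 :=
    fun j hj => by
      have := (mem_filter.1 (mem_filter.1 hj).1).2
      have := hstrip j
      omega
  have hsplitC := sum_filter_add_sum_filter_not S (fun j => L (j + 1) < L j)
    fun j => d + j - N j
  have hsplitA := sum_filter_add_sum_filter_not S (fun j => j = 0 ∨ N j < N (j - 1))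
    fun j => d + j - N j
  have hcardC := card_filter_add_card_filter_not (s := S) (fun j => L (j + 1) < L j)
  rw [filter_isCornerCol_of_strip hstrip, filter_isAddableCol_of_strip hstrip, hcard,
    sum_congr rfl hcorner, ← hcardC]
  simp only [sum_add_distrib, sum_const, nsmul_eq_mul, mul_one] at hshift ⊢
  push_cast
  linarith

end ColumnIdentity

namespace YoungDiagram

open scoped Classical

theorem mk_mem_corners_and_isHorizontalStrip_iff {μ ν : YoungDiagram} (hν : ν ≤ μ) {i j : ℕ} :
    (i, j) ∈ μ.corners ∧ ν.IsHorizontalStrip (μ.eraseCorner (i, j)) ↔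
      i + 1 = μ.colLen j ∧ IsCornerCol μ.colLen ν.colLen j := by
  have hNL := le_iff_colLen_le.1 hν
  constructor
  · rintro ⟨hc, hs⟩
    obtain ⟨h₁, h₂⟩ := mk_mem_corners_iff.1 hc
    rw [isHorizontalStrip_iff_colLen] at hs
    have hsj := hs j
    rw [colLen_eraseCorner hc, if_pos rfl] at hsj
    refine ⟨h₁, by omega, h₂, by omega, fun j' hj' => ?_⟩
    have := hs j'
    rw [colLen_eraseCorner hc, if_neg hj'] at this
    omega
  · rintro ⟨h₁, h₂, h₃, h₄, h₅⟩
    have hc := mk_mem_corners_iff.2 ⟨h₁, h₃⟩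
    refine ⟨hc, isHorizontalStrip_iff_colLen.2 fun j' => ?_⟩
    rw [colLen_eraseCorner hc]
    have := hNL j'
    split_ifs with hj'
    · subst hj'
      omega
    · have := h₅ j' hj'
      omega

theorem isLowerSet_insert_colLen {ν : YoungDiagram} {j : ℕ}
    (h : j = 0 ∨ ν.colLen j < ν.colLen (j - 1)) :
    IsLowerSet (↑(insert (ν.colLen j, j) ν.cells) : Set (ℕ × ℕ)) := by
  intro a b hba ha
  rw [coe_insert, Set.mem_insert_iff, mem_coe, mem_cells] at ha ⊢
  rcases ha with rfl | ha
  · by_cases hb : b = (ν.colLen j, j)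
    · exact Or.inl hb
    right
    obtain ⟨hb₁, hb₂⟩ := hba
    dsimp only at hb₁ hb₂
    rw [mem_iff_lt_colLen]
    rcases hb₂.lt_or_eq with hb₂ | hb₂
    · have := ν.colLen_anti b.2 (j - 1) (by omega)
      omega
    · have : b.1 ≠ ν.colLen j := fun h => hb (Prod.ext h hb₂)
      rw [hb₂]
      omega
  · exact Or.inr (ν.up_left_mem hba.1 hba.2 ha)

theorem colLen_addCell {ν : YoungDiagram} {j : ℕ}
    (h : IsLowerSet (↑(insert (ν.colLen j, j) ν.cells) : Set (ℕ × ℕ))) (j' : ℕ) :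
    (ν.addCell (ν.colLen j, j)).colLen j' = if j' = j then ν.colLen j + 1 else ν.colLen j' := by
  refine colLen_eq_of_mem_iff fun i => ?_
  rw [← mem_cells, cells_addCell h, mem_insert, mem_cells, mem_iff_lt_colLen, Prod.mk.injEq]
  split_ifs with hj
  · subst hj
    omega
  · tauto

theorem isAddableCol_of_mem_corners_addCell {μ ν : YoungDiagram} {i j : ℕ} (hnotin : (i, j) ∉ ν)
    (hc : (i, j) ∈ (ν.addCell (i, j)).corners) (hs : (ν.addCell (i, j)).IsHorizontalStrip μ) :
    i = ν.colLen j ∧ IsAddableCol μ.colLen ν.colLen j := by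
  have hE := colLen_eraseCorner hc
  rw [eraseCorner_addCell hnotin hc] at hE
  obtain ⟨h₁, h₂⟩ := mk_mem_corners_iff.1 hc
  rw [isHorizontalStrip_iff_colLen] at hs
  have hEj := hE j
  have hsj := hs j
  rw [if_pos rfl] at hEj
  refine ⟨by omega, by omega, ?_, by omega, fun j' hj' => ?_⟩
  · rcases Nat.eq_zero_or_pos j with hj | hj
    · exact Or.inl hj
    · have hE' := hE (j - 1)
      rw [if_neg (by dsimp only; omega)] at hE'
      have := (ν.addCell (i, j)).colLen_anti (j - 1) j (Nat.sub_le j 1)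
      omega
  · have := hE j'
    have := hs j'
    rw [if_neg hj'] at *
    omega

theorem mem_corners_addCell_of_isAddableCol {μ ν : YoungDiagram} (hν : ν ≤ μ) {j : ℕ}
    (h : IsAddableCol μ.colLen ν.colLen j) :
    (ν.colLen j, j) ∈ (ν.addCell (ν.colLen j, j)).corners ∧
      (ν.addCell (ν.colLen j, j)).IsHorizontalStrip μ := by
  obtain ⟨h₁, h₂, h₃, h₄⟩ := h
  have hA := colLen_addCell (isLowerSet_insert_colLen h₂)
  have hNL := le_iff_colLen_le.1 hν
  refine ⟨mk_mem_corners_iff.2 ?_, isHorizontalStrip_iff_colLen.2 fun j' => ?_⟩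
  · rw [hA, hA, if_pos rfl, if_neg (by omega)]
    have := ν.colLen_anti j (j + 1) (Nat.le_add_right j 1)
    omega
  · rw [hA]
    have := hNL j'
    split_ifs with hj'
    · subst hj'
      omega
    · have := h₄ j' hj'
      omega

noncomputable def addables (μ ν : YoungDiagram) : Finset (ℕ × ℕ) :=
  μ.cells.filter fun c => c ∉ ν ∧ c ∈ (ν.addCell c).corners ∧ (ν.addCell c).IsHorizontalStrip μ

theorem mk_mem_addables_iff {μ ν : YoungDiagram} (hν : ν ≤ μ) {i j : ℕ} :
    (i, j) ∈ addables μ ν ↔ i = ν.colLen j ∧ IsAddableCol μ.colLen ν.colLen j := by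
  rw [addables, mem_filter, mem_cells]
  refine ⟨fun ⟨_, hnotin, hc, hs⟩ => isAddableCol_of_mem_corners_addCell hnotin hc hs, ?_⟩
  rintro ⟨rfl, h⟩
  exact ⟨mem_iff_lt_colLen.2 h.1, fun h' => lt_irrefl _ (mem_iff_lt_colLen.1 h'),
    mem_corners_addCell_of_isAddableCol hν h⟩

theorem sum_stripRemovals_sum_corners {M : Type*} [AddCommMonoid M] (μ : YoungDiagram)
    (F : ℕ × ℕ → YoungDiagram → M) :
    ∑ ρ ∈ μ.stripRemovals, ∑ c ∈ ρ.corners, F c (ρ.eraseCorner c) =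
      ∑ ν ∈ μ.subdiagrams, ∑ c ∈ addables μ ν, F c ν := by
  rw [sum_sigma', sum_sigma']
  refine sum_nbij' (fun x => ⟨x.1.eraseCorner x.2, x.2⟩) (fun y => ⟨y.1.addCell y.2, y.2⟩)
    (fun x hx => ?_) (fun y hy => ?_) (fun x hx => ?_) (fun y hy => ?_) (fun _ _ => rfl)
  all_goals simp only [mem_sigma, mem_stripRemovals, mem_subdiagrams, addables, mem_filter] at *
  · have hcρ : x.2 ∈ x.1 := (mem_corners.1 hx.2).1
    rw [addCell_eraseCorner hx.2]
    refine ⟨(x.1.eraseCorner_le x.2).trans hx.1.1, (mem_cells _).2 (hx.1.1 hcρ), fun h => ?_,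
      hx.2, hx.1⟩
    rw [← mem_cells, cells_eraseCorner hx.2] at h
    exact notMem_erase _ _ h
  · exact ⟨hy.2.2.2.2, hy.2.2.2.1⟩
  · rw [addCell_eraseCorner hx.2]
  · rw [eraseCorner_addCell hy.2.2.1 hy.2.2.2.1]

theorem sum_corners_filter_eq_sum_addables (d : ℕ) {μ ν : YoungDiagram} (hν : ν ≤ μ) :
    ∑ c ∈ μ.corners.filter (fun c => ν.IsHorizontalStrip (μ.eraseCorner c)),
        ((d : ℤ) + 1 + c.2 - c.1) =
      ∑ c ∈ addables μ ν, ((d : ℤ) + c.2 - c.1) +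
        if ν.IsHorizontalStrip μ then (#μ.cells : ℤ) - #ν.cells else 0 := by
  have hNL := le_iff_colLen_le.1 hν
  have hW : ∀ j, μ.rowLen 0 ≤ j → μ.colLen j = 0 := fun j hj => by
    by_contra h
    exact absurd (colLen_pos_iff.1 (Nat.pos_of_ne_zero h)) (by omega)
  have hCW : ∀ j, IsCornerCol μ.colLen ν.colLen j → j < μ.rowLen 0 := fun j h =>
    colLen_pos_iff.1 (by have := h.1; omega)
  have hAW : ∀ j, IsAddableCol μ.colLen ν.colLen j → j < μ.rowLen 0 := fun j h =>
    colLen_pos_iff.1 (by have := h.1; omega)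
  rw [sum_eq_sum_filter_range_of_mem_iff (f := fun j => μ.colLen j - 1) (fun i j => by
      rw [mem_filter, mk_mem_corners_and_isHorizontalStrip_iff hν]
      exact ⟨fun ⟨h₁, h₂⟩ => ⟨by omega, h₂⟩, fun ⟨h₁, h₂⟩ => ⟨by have := h₂.1; omega, h₂⟩⟩) hCW,
    sum_eq_sum_filter_range_of_mem_iff (fun i j => mk_mem_addables_iff hν) hAW]
  have hcorner : ∀ j ∈ (range (μ.rowLen 0)).filter (IsCornerCol μ.colLen ν.colLen),
      (d : ℤ) + 1 + j - (μ.colLen j - 1 : ℕ) = d + 2 + j - μ.colLen j := fun j hj => by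
    have := (mem_filter.1 hj).2.1
    push_cast [Nat.cast_sub (show 1 ≤ μ.colLen j by omega)]
    ring
  rw [sum_congr rfl hcorner]
  have hanti : ∀ κ : YoungDiagram, Antitone κ.colLen := fun κ _ _ h => κ.colLen_anti _ _ h
  by_cases hstrip : ∀ j, μ.colLen j ≤ ν.colLen j + 1
  · rw [if_pos (isHorizontalStrip_iff_colLen.2 fun j => ⟨hNL j, hstrip j⟩),
      card_cells_eq_sum_colLen μ le_rfl, card_cells_eq_sum_colLen ν (rowLen_le_rowLen hν 0)]
    push_cast
    rw [← sum_sub_distrib]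
    exact sum_isCornerCol_of_strip (hanti μ) (hanti ν) hNL hstrip hW _
  · rw [if_neg fun h => hstrip fun j => ((isHorizontalStrip_iff_colLen.1 h) j).2, add_zero]
    exact sum_isCornerCol_of_not_strip (hanti μ) (hanti ν) hstrip _ _

end YoungDiagram

open YoungDiagram

theorem sum_corners_mul_dimGL_zero (μ : YoungDiagram) :
    ∑ c ∈ μ.corners, (((0 : ℕ) : ℤ) + c.2 - c.1) * dimGL 0 (μ.eraseCorner c) =
      #μ.cells * dimGL 0 μ := by
  classical
  by_cases hμ : μ = ⊥
  · subst hμ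
    simp [corners]
  rw [dimGL_zero μ, if_neg hμ, Nat.cast_zero, mul_zero]
  refine sum_eq_zero fun c hc => ?_
  rw [dimGL_zero]
  split_ifs with he
  · obtain rfl : c = (0, 0) := by
      by_contra hc₀
      have : (0, 0) ∈ μ.eraseCorner c := by
        rw [← mem_cells, cells_eraseCorner hc, mem_erase, mem_cells]
        exact ⟨Ne.symm hc₀, zero_zero_mem_iff_ne_bot.2 hμ⟩
      exact notMem_bot _ (he ▸ this)
    simp
  · simp

open scoped Classical in
theorem sum_corners_mul_dimGL_succ (d : ℕ) (μ : YoungDiagram) :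
    ∑ c ∈ μ.corners, (((d + 1 : ℕ) : ℤ) + c.2 - c.1) * dimGL (d + 1) (μ.eraseCorner c) =
      ∑ ν ∈ μ.subdiagrams, (∑ c ∈ μ.corners.filter
        (fun c => ν.IsHorizontalStrip (μ.eraseCorner c)), ((d : ℤ) + 1 + c.2 - c.1)) *
          dimGL d ν := by
  have hexpand : ∀ c ∈ μ.corners,
      (((d + 1 : ℕ) : ℤ) + c.2 - c.1) * dimGL (d + 1) (μ.eraseCorner c) =
        ∑ ν ∈ μ.subdiagrams, if ν.IsHorizontalStrip (μ.eraseCorner c)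
          then ((d : ℤ) + 1 + c.2 - c.1) * dimGL d ν else 0 := fun c _ => by
    rw [dimGL_succ, stripRemovals_eq_filter (μ.eraseCorner_le c), ← sum_filter, Nat.cast_sum,
      mul_sum]
    push_cast
    congr 1
  rw [sum_congr rfl hexpand, sum_comm]
  simp_rw [sum_mul, ← sum_filter]

open scoped Classical in
theorem card_mul_dimGL_succ (d : ℕ) (μ : YoungDiagram)
    (ih : ∀ ρ : YoungDiagram, ∑ c ∈ ρ.corners, ((d : ℤ) + c.2 - c.1) * dimGL d (ρ.eraseCorner c) =
      #ρ.cells * dimGL d ρ) :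
    (#μ.cells : ℤ) * dimGL (d + 1) μ =
      ∑ ν ∈ μ.subdiagrams, (∑ c ∈ addables μ ν, ((d : ℤ) + c.2 - c.1) +
        if ν.IsHorizontalStrip μ then (#μ.cells : ℤ) - #ν.cells else 0) * dimGL d ν := by
  have hsplit : ∀ ρ : YoungDiagram, (#μ.cells : ℤ) * dimGL d ρ =
      (#μ.cells - #ρ.cells) * dimGL d ρ +
        ∑ c ∈ ρ.corners, ((d : ℤ) + c.2 - c.1) * dimGL d (ρ.eraseCorner c) := fun ρ => by
    rw [ih]
    ring
  rw [dimGL_succ, Nat.cast_sum, mul_sum, sum_congr rfl fun ρ _ => hsplit ρ, sum_add_distrib,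
    sum_stripRemovals_sum_corners μ fun c ν => ((d : ℤ) + c.2 - c.1) * dimGL d ν, stripRemovals,
    sum_filter, ← sum_add_distrib]
  refine sum_congr rfl fun ν _ => ?_
  rw [add_mul, sum_mul]
  split_ifs <;> ring

theorem sum_corners_mul_dimGL_eraseCorner (d : ℕ) (μ : YoungDiagram) :
    ∑ c ∈ μ.corners, ((d : ℤ) + c.2 - c.1) * dimGL d (μ.eraseCorner c) =
      #μ.cells * dimGL d μ := by
  classical
  induction d generalizing μ with
  | zero => exact sum_corners_mul_dimGL_zero μ
  | succ d ih =>
    rw [sum_corners_mul_dimGL_succ, card_mul_dimGL_succ d μ ih]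
    exact sum_congr rfl fun ν hν =>
      congrArg (· * _) (sum_corners_filter_eq_sum_addables d (mem_subdiagrams.1 hν))

theorem mem_oneBoxRemovals_iff {μ β : YoungDiagram} :
    β ∈ oneBoxRemovals μ ↔ ∃ c ∈ μ.corners, μ.eraseCorner c = β := by
  rw [oneBoxRemovals, Set.mem_ofPred_eq, ← exists_eq_insert_iff]
  constructor
  · rintro ⟨c, hcβ, hins⟩
    have hcμ : c ∈ μ := (mem_cells c).1 (hins ▸ mem_insert_self c _)
    have hbelow : ∀ c' ∈ μ, c ≤ c' → c' = c := fun c' hc' hle => by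
      by_contra hne
      have hc'β : c' ∈ insert c β.cells := hins ▸ (mem_cells c').2 hc'
      replace hc'β := (mem_cells c').1 ((mem_insert.1 hc'β).resolve_left hne)
      exact hcβ ((mem_cells c).2 (β.up_left_mem hle.1 hle.2 hc'β))
    have hc : c ∈ μ.corners := mem_corners.2 ⟨hcμ,
      fun h => absurd (congrArg Prod.fst (hbelow _ h ⟨Nat.le_succ _, le_rfl⟩)) (by simp),
      fun h => absurd (congrArg Prod.snd (hbelow _ h ⟨le_rfl, Nat.le_succ _⟩)) (by simp)⟩
    refine ⟨c, hc, YoungDiagram.ext ?_⟩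
    rw [cells_eraseCorner hc, ← hins, erase_insert hcβ]
  · rintro ⟨c, hc, rfl⟩
    refine ⟨c, fun h => ?_, ?_⟩
    · rw [cells_eraseCorner hc] at h
      exact notMem_erase c _ h
    · rw [cells_eraseCorner hc, insert_erase ((mem_cells c).2 (mem_corners.1 hc).1)]

theorem cRatio_eq_sum_corners (d : ℕ) (μ : YoungDiagram) :
    cRatio d μ = (∑ c ∈ μ.corners, (dimGL d (μ.eraseCorner c) : ℚ)) / dimGL d μ := by
  classical
  have himage : oneBoxRemovals μ = ↑(μ.corners.image μ.eraseCorner) := by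
    ext β
    rw [mem_oneBoxRemovals_iff, coe_image, Set.mem_image]
    rfl
  rw [cRatio, himage, finsum_mem_coe_finset, sum_image (μ.eraseCorner_injOn)]

theorem cRatio_le {d : ℕ} {μ : YoungDiagram} (h : #μ.cells ≤ d) :
    cRatio d μ ≤ #μ.cells / ((d : ℚ) - #μ.cells + 1) := by
  have hpos : (0 : ℚ) < dimGL d μ := by
    exact_mod_cast dimGL_pos ((μ.colLen_le_card_cells 0).trans h)
  have hd : (0 : ℚ) < d - #μ.cells + 1 := by
    have : (#μ.cells : ℚ) ≤ d := by exact_mod_cast h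
    linarith
  have hid : ∑ c ∈ μ.corners, ((d : ℚ) + c.2 - c.1) * dimGL d (μ.eraseCorner c) =
      #μ.cells * dimGL d μ := by
    exact_mod_cast sum_corners_mul_dimGL_eraseCorner d μ
  have hbound : ((d : ℚ) - #μ.cells + 1) * ∑ c ∈ μ.corners, (dimGL d (μ.eraseCorner c) : ℚ) ≤
      #μ.cells * dimGL d μ := by
    rw [← hid, mul_sum]
    refine sum_le_sum fun c hc => mul_le_mul_of_nonneg_right ?_ (Nat.cast_nonneg _)
    have hrow : c.1 + 1 ≤ #μ.cells :=
      (mk_mem_corners_iff.1 hc).1.trans_le (μ.colLen_le_card_cells c.2)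
    have : (c.1 : ℚ) + 1 ≤ #μ.cells := by exact_mod_cast hrow
    have : (0 : ℚ) ≤ c.2 := Nat.cast_nonneg _
    linarith
  rw [cRatio_eq_sum_corners, div_le_div_iff₀ hpos hd]
  linarith

theorem mem_columnDiagram {n : ℕ} {c : ℕ × ℕ} : c ∈ columnDiagram n ↔ c.1 < n ∧ c.2 = 0 := by
  rw [columnDiagram, mem_ofRowLens]
  simp only [List.length_replicate, List.getElem_replicate, exists_prop]
  omega

theorem colLen_columnDiagram (n j : ℕ) :
    (columnDiagram n).colLen j = if j = 0 then n else 0 :=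
  colLen_eq_of_mem_iff fun i => by
    rw [mem_columnDiagram]
    dsimp only
    split_ifs <;> omega

theorem card_cells_columnDiagram (n : ℕ) : #(columnDiagram n).cells = n := by
  have hrow : (columnDiagram n).rowLen 0 ≤ 1 := by
    by_contra! h
    have := mem_columnDiagram.1 (mem_iff_lt_rowLen.2 h)
    omega
  simp [card_cells_eq_sum_colLen _ hrow, colLen_columnDiagram]

theorem mem_corners_columnDiagram {n : ℕ} {c : ℕ × ℕ} :
    c ∈ (columnDiagram n).corners ↔ c.1 + 1 = n ∧ c.2 = 0 := by
  obtain ⟨i, j⟩ := c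
  rw [mk_mem_corners_iff, colLen_columnDiagram, colLen_columnDiagram]
  dsimp only
  split_ifs <;> grind

theorem cRatio_columnDiagram {d n : ℕ} (h : n ≤ d) :
    cRatio d (columnDiagram n) = n / ((d : ℚ) - n + 1) := by
  rcases n with _ | k
  · have : (columnDiagram 0).corners = ∅ :=
      eq_empty_of_forall_notMem fun c hc => by have := mem_corners_columnDiagram.1 hc; omega
    simp [cRatio_eq_sum_corners, this]
  have hcorners : (columnDiagram (k + 1)).corners = {(k, 0)} := by
    ext c
    rw [mem_corners_columnDiagram, mem_singleton, Prod.ext_iff]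
    omega
  have hpos : (0 : ℚ) < dimGL d (columnDiagram (k + 1)) := by
    exact_mod_cast dimGL_pos (by rw [colLen_columnDiagram, if_pos rfl]; exact h)
  have hd : (0 : ℚ) < d - (k + 1 : ℕ) + 1 := by
    have : ((k + 1 : ℕ) : ℚ) ≤ d := by exact_mod_cast h
    linarith
  have hid : ((d : ℚ) + 0 - k) * dimGL d ((columnDiagram (k + 1)).eraseCorner (k, 0)) =
      (k + 1 : ℕ) * dimGL d (columnDiagram (k + 1)) := by
    have := sum_corners_mul_dimGL_eraseCorner d (columnDiagram (k + 1))
    rw [hcorners, sum_singleton, card_cells_columnDiagram] at this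
    exact_mod_cast this
  rw [cRatio_eq_sum_corners, hcorners, sum_singleton, div_eq_div_iff hpos.ne' hd.ne']
  push_cast at hid ⊢
  linarith

/-- For every partition `λ` of `n ≤ d` with at most `d` rows,
`c(λ) := (Σ_{β ∈ λ} m_β)/m_λ ≤ n/(d−n+1)`, with equality for the column `λ = [1^{×n}]`. -/
theorem cRatio_le_column (d n : ℕ) (hnd : n ≤ d) :
    (∀ μ : YoungDiagram, μ.cells.card = n → μ.colLen 0 ≤ d →
        cRatio d μ ≤ (n : ℚ) / ((d : ℚ) - (n : ℚ) + 1)) ∧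
    cRatio d (columnDiagram n) = (n : ℚ) / ((d : ℚ) - (n : ℚ) + 1) :=
  ⟨fun _ hμ _ => hμ ▸ cRatio_le (hμ ▸ hnd), cRatio_columnDiagram hnd⟩
end

section
/- Vershik's identity: for a partition λ of n with step representation (k₁,p₁,…,k_s,p_s) and corner boxes c₁,…,c_s, one has Σ_{j=1}^s k_j p_j Π_{i<j} (1 + k_i/d(c_i,c_j)) Π_{i>j} (1 + p_i/d(c_j,c_i)) = n, where d(b₁,b₂) := |i₁−i₂| + |j₁−j₂| is the axial distance between boxes. -/
open Finset

/-- Row coordinate (1-based) of the `j`-th corner box of the Young diagram with step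
representation `(k₁,p₁,…,k_s,p_s)`: `i_{c_j} = k₁ + … + k_j`. -/
def cornerRow {s : ℕ} (k : Fin s → ℕ) (j : Fin s) : ℕ :=
  ∑ i ∈ Finset.univ.filter (· ≤ j), k i

/-- Column coordinate (1-based) of the `j`-th corner box:
`j_{c_j} = p_j + p_{j+1} + … + p_s`. -/
def cornerCol {s : ℕ} (p : Fin s → ℕ) (j : Fin s) : ℕ :=
  ∑ i ∈ Finset.univ.filter (j ≤ ·), p i

/-- Axial distance `d(c_a, c_b) = |i_{c_a} − i_{c_b}| + |j_{c_a} − j_{c_b}|` between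
corner boxes `c_a` and `c_b`. -/
def axialDist {s : ℕ} (k p : Fin s → ℕ) (a b : Fin s) : ℚ :=
  |(cornerRow k a : ℚ) - (cornerRow k b : ℚ)| + |(cornerCol p a : ℚ) - (cornerCol p b : ℚ)|

/-!
Let `t_j` be row minus column of the corner `c_j` and `u_0, …, u_s` row minus column of the
boxes that can be added to `λ`. Then `d(c_i, c_j) = t_j - t_i`, `k_j = t_j - u_{j-1}` and
`p_j = u_j - t_j`, so the `j`-th summand is `-∏_i (t_j - u_i) / ∏_{i ≠ j} (t_j - t_i)`, minus
the residue at `t_j` of `∏_i (z - u_i) / ∏_i (z - t_i)`. Since `Σ u_i = Σ t_i`, Lagrange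
interpolation evaluates the sum of these residues through the top coefficients of the two
products as `(Σ t_i² - Σ u_i²) / 2`, and `Σ u_i² - Σ t_i² = 2n` by telescoping.
-/

open Polynomial

namespace Lagrange

section CommRing

variable {R ι : Type*} [CommRing R] [Nontrivial R] (s : Finset ι) (v : ι → R)

theorem coeff_X_mul_nodal_card : (X * nodal s v).coeff #s = -∑ i ∈ s, v i := by
  classical
  induction s using Finset.induction_on with
  | empty => simp
  | insert a s ha ih =>
    have hlead : (nodal s v).coeff #s = 1 := by
      simpa using (nodal_monic (s := s) (v := v)).coeff_natDegree
    have hsplit : X * nodal (insert a s) v = X * (X * nodal s v) - C (v a) * (X * nodal s v) := by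
      rw [nodal_insert_eq_nodal ha]; ring
    rw [hsplit, card_insert_of_notMem ha, sum_insert ha, coeff_sub, coeff_C_mul, coeff_X_mul,
      coeff_X_mul, ih, hlead]
    ring

theorem two_mul_coeff_X_sq_mul_nodal_card :
    2 * (X ^ 2 * nodal s v).coeff #s = (∑ i ∈ s, v i) ^ 2 - ∑ i ∈ s, v i ^ 2 := by
  classical
  induction s using Finset.induction_on with
  | empty => simp
  | insert a s ha ih =>
    have hsplit : X ^ 2 * nodal (insert a s) v
        = X * (X ^ 2 * nodal s v) - C (v a) * (X * (X * nodal s v)) := by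
      rw [nodal_insert_eq_nodal ha]; ring
    rw [hsplit, card_insert_of_notMem ha, sum_insert ha, sum_insert ha, coeff_sub, coeff_C_mul,
      coeff_X_mul, coeff_X_mul, mul_sub, ih, coeff_X_mul_nodal_card]
    ring

end CommRing

variable {F ι : Type*} [Field F] [DecidableEq ι]

theorem coeff_X_mul_card_eq_sum {s : Finset ι} {v : ι → F} (hvs : Set.InjOn v s) {P : F[X]}
    (hP : P.degree < #s) :
    (X * P).coeff #s = ∑ i ∈ s, P.eval (v i) / ∏ j ∈ s.erase i, (v i - v j) := by
  obtain rfl | hs := s.eq_empty_or_nonempty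
  · simp
  · obtain ⟨m, hm⟩ := Nat.exists_eq_add_one.mpr hs.card_pos
    rw [hm, coeff_X_mul, ← coeff_eq_sum hvs hP, hm, Nat.add_sub_cancel]

theorem two_mul_sum_prod_sub_div_prod_sub {κ : Type*} (s : Finset ι) (S : Finset κ)
    (t : ι → F) (u : κ → F) (ht : Set.InjOn t s) (hcard : #S = #s + 1)
    (hsum : ∑ i ∈ S, u i = ∑ j ∈ s, t j) :
    2 * ∑ j ∈ s, (∏ i ∈ S, (t j - u i)) / ∏ i ∈ s.erase j, (t j - t i)
      = ∑ j ∈ s, t j ^ 2 - ∑ i ∈ S, u i ^ 2 := by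
  set f := nodal S u
  set g := nodal s t
  have hf_top : f.coeff (#s + 1) = 1 := by
    simpa [hcard] using (nodal_monic (s := S) (v := u)).coeff_natDegree
  have hg_top : g.coeff #s = 1 := by simpa using (nodal_monic (s := s) (v := t)).coeff_natDegree
  have hf_next : f.coeff #s = -∑ i ∈ S, u i := by
    rw [← coeff_X_mul, ← hcard, coeff_X_mul_nodal_card]
  have hdeg : (f - X * g).degree < (#s : WithBot ℕ) := by
    rw [degree_lt_iff_coeff_zero]
    intro m hm
    obtain rfl | rfl | hm : m = #s ∨ m = #s + 1 ∨ #s + 1 < m := by omega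
    · rw [coeff_sub, hf_next, coeff_X_mul_nodal_card, hsum, sub_self]
    · rw [coeff_sub, coeff_X_mul, hf_top, hg_top, sub_self]
    · obtain ⟨m, rfl⟩ := Nat.exists_eq_add_one.mpr (by omega : 0 < m)
      rw [coeff_sub, coeff_X_mul, coeff_eq_zero_of_natDegree_lt (by simp [f, hcard]; omega),
        coeff_eq_zero_of_natDegree_lt (by simp [g]; omega), sub_self]
  have heval : ∀ j ∈ s, (f - X * g).eval (t j) = ∏ i ∈ S, (t j - u i) := fun j hj => by
    rw [eval_sub, eval_mul, eval_nodal_at_node hj, mul_zero, sub_zero, eval_nodal]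
  calc 2 * ∑ j ∈ s, (∏ i ∈ S, (t j - u i)) / ∏ i ∈ s.erase j, (t j - t i)
      = 2 * (X * (f - X * g)).coeff #s := by
        rw [coeff_X_mul_card_eq_sum ht hdeg]
        exact congrArg _ (sum_congr rfl fun j hj => by rw [heval j hj])
    _ = 2 * (X ^ 2 * f).coeff #S - 2 * (X ^ 2 * g).coeff #s := by
        rw [hcard, pow_two, mul_assoc, coeff_X_mul, mul_sub, coeff_sub, mul_assoc, mul_sub]
    _ = ∑ j ∈ s, t j ^ 2 - ∑ i ∈ S, u i ^ 2 := by
        rw [two_mul_coeff_X_sq_mul_nodal_card, two_mul_coeff_X_sq_mul_nodal_card, hsum]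
        ring

end Lagrange

namespace Fin

variable {M : Type*} [CommMonoid M] {n : ℕ}

theorem prod_univ_eq_prod_Iio_castSucc_mul_prod_Ioi_succ (j : Fin n) (G : Fin (n + 1) → M) :
    ∏ i, G i = (∏ i ∈ Iio j, G i.castSucc) * G j.castSucc * G j.succ
      * ∏ i ∈ Ioi j, G i.succ := by
  have hge : univ.filter (fun i => ¬ i < j) = Ici j := by ext; simp
  rw [prod_univ_succAbove G j.castSucc, ← prod_filter_mul_prod_filter_not univ (· < j),
    filter_gt_eq_Iio, hge, ← Ioi_insert, prod_insert notMem_Ioi_self, succAbove_castSucc_self,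
    prod_congr rfl fun i hi => congrArg G (succAbove_castSucc_of_lt _ _ (mem_Iio.1 hi)),
    prod_congr (s₁ := Ioi j) rfl fun i hi =>
      congrArg G (succAbove_castSucc_of_le _ _ (mem_Ioi.1 hi).le)]
  ac_rfl

theorem prod_erase_eq_prod_Iio_mul_prod_Ioi (j : Fin n) (f : Fin n → M) :
    ∏ i ∈ univ.erase j, f i = (∏ i ∈ Iio j, f i) * ∏ i ∈ Ioi j, f i := by
  rw [← prod_union (disjoint_left.2 fun i hi hi' => lt_asymm (mem_Iio.1 hi) (mem_Ioi.1 hi'))]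
  congr 1
  ext i
  simp [← lt_or_lt_iff_ne, or_comm]

end Fin

section StepRepresentation

variable {s : ℕ} (k p : Fin s → ℕ)

def partialRowSum (m : ℕ) : ℚ :=
  ∑ j ∈ univ.filter (fun j : Fin s => (j : ℕ) < m), (k j : ℚ)

def tailColSum (m : ℕ) : ℚ :=
  ∑ j ∈ univ.filter (fun j : Fin s => m ≤ (j : ℕ)), (p j : ℚ)

theorem partialRowSum_zero : partialRowSum k 0 = 0 := by
  simp [partialRowSum]

theorem partialRowSum_succ (j : Fin s) :
    partialRowSum k (j + 1) = partialRowSum k j + k j := by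
  have h : univ.filter (fun i : Fin s => (i : ℕ) < j + 1)
      = insert j (univ.filter (fun i : Fin s => (i : ℕ) < j)) := by
    ext i
    simp only [mem_filter, mem_univ, true_and, mem_insert, Fin.ext_iff]
    omega
  rw [partialRowSum, partialRowSum, h, sum_insert (by simp), add_comm]

theorem partialRowSum_mono : Monotone (partialRowSum k) := fun m m' h =>
  sum_le_sum_of_subset_of_nonneg
    (fun i hi => by simp only [mem_filter, mem_univ, true_and] at hi ⊢; omega)
    fun _ _ _ => by positivity

theorem tailColSum_zero : tailColSum p 0 = ∑ j, (p j : ℚ) := by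
  simp [tailColSum]

theorem tailColSum_self : tailColSum p s = 0 :=
  sum_eq_zero fun i hi => absurd (mem_filter.1 hi).2 (not_le.2 i.is_lt)

theorem tailColSum_succ (j : Fin s) :
    tailColSum p j = p j + tailColSum p (j + 1) := by
  have h : univ.filter (fun i : Fin s => (j : ℕ) ≤ i)
      = insert j (univ.filter (fun i : Fin s => (j : ℕ) + 1 ≤ i)) := by
    ext i
    simp only [mem_filter, mem_univ, true_and, mem_insert, Fin.ext_iff]
    omega
  rw [tailColSum, tailColSum, h, sum_insert (by simp)]

theorem tailColSum_antitone : Antitone (tailColSum p) := fun m m' h =>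
  sum_le_sum_of_subset_of_nonneg
    (fun i hi => by simp only [mem_filter, mem_univ, true_and] at hi ⊢; omega)
    fun _ _ _ => by positivity

theorem natCast_cornerRow (j : Fin s) :
    (cornerRow k j : ℚ) = partialRowSum k (j + 1) := by
  simp only [cornerRow, partialRowSum, Nat.cast_sum, Nat.lt_succ_iff, Fin.le_def]

theorem natCast_cornerCol (j : Fin s) :
    (cornerCol p j : ℚ) = tailColSum p j := by
  simp only [cornerCol, tailColSum, Nat.cast_sum, Fin.le_def]

/-- Row minus column of the corner box `c_j`; `addableContent k p i` is row minus column of the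
`i`-th box that can be added to the diagram. -/
def cornerContent (j : Fin s) : ℚ := partialRowSum k (j + 1) - tailColSum p j

def addableContent (i : Fin (s + 1)) : ℚ := partialRowSum k i - tailColSum p i

theorem axialDist_eq_cornerContent_sub {i j : Fin s} (hij : i ≤ j) :
    axialDist k p i j = cornerContent k p j - cornerContent k p i := by
  have hrow := partialRowSum_mono k (Nat.succ_le_succ (Fin.le_def.1 hij))
  have hcol := tailColSum_antitone p (Fin.le_def.1 hij)
  rw [axialDist, natCast_cornerRow, natCast_cornerRow, natCast_cornerCol, natCast_cornerCol,
    abs_of_nonpos (by linarith), abs_of_nonneg (by linarith), cornerContent, cornerContent]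
  ring

theorem cornerContent_strictMono (hp : ∀ i, 1 ≤ p i) : StrictMono (cornerContent k p) := by
  intro i j hij
  have hrow := partialRowSum_mono k (Nat.succ_le_succ (Fin.le_def.1 hij.le))
  have hcol := tailColSum_antitone p (Fin.lt_def.1 hij)
  have hpi : (1 : ℚ) ≤ p i := by exact_mod_cast hp i
  rw [cornerContent, cornerContent, tailColSum_succ p i]
  linarith

theorem natCast_eq_cornerContent_sub_addableContent (j : Fin s) :
    (k j : ℚ) = cornerContent k p j - addableContent k p j.castSucc := by
  rw [cornerContent, addableContent, Fin.val_castSucc, partialRowSum_succ]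
  ring

theorem natCast_eq_addableContent_sub_cornerContent (j : Fin s) :
    (p j : ℚ) = addableContent k p j.succ - cornerContent k p j := by
  rw [cornerContent, addableContent, Fin.val_succ, tailColSum_succ]
  ring

theorem sum_addableContent : ∑ i, addableContent k p i = ∑ j, cornerContent k p j := by
  have hstep : ∀ j : Fin s, addableContent k p j.succ = cornerContent k p j + p j := fun j => by
    rw [natCast_eq_addableContent_sub_cornerContent k p j]; ring
  rw [Fin.sum_univ_succ, addableContent, Fin.val_zero, partialRowSum_zero, tailColSum_zero,
    Finset.sum_congr rfl fun j _ => hstep j, sum_add_distrib]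
  ring

theorem sum_sq_addableContent_sub_sum_sq_cornerContent :
    ∑ i, addableContent k p i ^ 2 - ∑ j, cornerContent k p j ^ 2
      = 2 * ∑ j, (cornerRow k j : ℚ) * p j := by
  have hstep : ∀ j : Fin s, addableContent k p j.succ ^ 2 - cornerContent k p j ^ 2
      = 2 * ((cornerRow k j : ℚ) * p j) - (tailColSum p j ^ 2 - tailColSum p (j + 1) ^ 2) :=
    fun j => by
      rw [addableContent, cornerContent, Fin.val_succ, natCast_cornerRow, tailColSum_succ p j]
      ring
  have htelescope : ∑ j : Fin s, (tailColSum p j ^ 2 - tailColSum p (j + 1) ^ 2)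
      = tailColSum p 0 ^ 2 := by
    rw [Fin.sum_univ_eq_sum_range (fun m => tailColSum p m ^ 2 - tailColSum p (m + 1) ^ 2),
      sum_range_sub' (fun m => tailColSum p m ^ 2), tailColSum_self]
    ring
  rw [Fin.sum_univ_succ, add_sub_assoc, ← sum_sub_distrib, sum_congr rfl fun j _ => hstep j,
    sum_sub_distrib, htelescope, ← mul_sum, addableContent, Fin.val_zero, partialRowSum_zero]
  ring

theorem one_add_div_axialDist_of_lt (hp : ∀ i, 1 ≤ p i) {i j : Fin s} (hij : i < j) :
    1 + (k i : ℚ) / axialDist k p i j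
      = (cornerContent k p j - addableContent k p i.castSucc)
        / (cornerContent k p j - cornerContent k p i) := by
  have hne := sub_ne_zero.2 (cornerContent_strictMono k p hp hij).ne'
  rw [axialDist_eq_cornerContent_sub k p hij.le, natCast_eq_cornerContent_sub_addableContent k p,
    one_add_div hne]
  ring

theorem one_add_div_axialDist_of_gt (hp : ∀ i, 1 ≤ p i) {i j : Fin s} (hji : j < i) :
    1 + (p i : ℚ) / axialDist k p j i
      = (cornerContent k p j - addableContent k p i.succ)
        / (cornerContent k p j - cornerContent k p i) := by
  have hne := sub_ne_zero.2 (cornerContent_strictMono k p hp hji).ne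
  rw [axialDist_eq_cornerContent_sub k p hji.le, natCast_eq_addableContent_sub_cornerContent k p,
    ← neg_sub (cornerContent k p j), div_neg, ← sub_eq_add_neg, one_sub_div hne]
  ring

theorem vershik_summand_eq (hp : ∀ i, 1 ≤ p i) (j : Fin s) :
    (k j : ℚ) * p j * (∏ i ∈ Iio j, (1 + (k i : ℚ) / axialDist k p i j))
        * (∏ i ∈ Ioi j, (1 + (p i : ℚ) / axialDist k p j i))
      = -((∏ i, (cornerContent k p j - addableContent k p i))
        / ∏ i ∈ univ.erase j, (cornerContent k p j - cornerContent k p i)) := by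
  rw [prod_congr rfl fun i hi => one_add_div_axialDist_of_lt k p hp (mem_Iio.1 hi),
    prod_congr rfl fun i hi => one_add_div_axialDist_of_gt k p hp (mem_Ioi.1 hi),
    prod_div_distrib, prod_div_distrib, Fin.prod_erase_eq_prod_Iio_mul_prod_Ioi,
    Fin.prod_univ_eq_prod_Iio_castSucc_mul_prod_Ioi_succ j,
    natCast_eq_cornerContent_sub_addableContent k p j,
    natCast_eq_addableContent_sub_cornerContent k p j]
  ring

end StepRepresentation

theorem vershik_identity_general (s : ℕ) (k p : Fin s → ℕ)
    (hp : ∀ i, 1 ≤ p i) (n : ℕ)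
    (hn : n = ∑ j : Fin s, cornerRow k j * p j) :
    ∑ j : Fin s, (k j : ℚ) * (p j : ℚ)
        * (∏ i ∈ Finset.univ.filter (· < j), (1 + (k i : ℚ) / axialDist k p i j))
        * (∏ i ∈ Finset.univ.filter (j < ·), (1 + (p i : ℚ) / axialDist k p j i))
      = (n : ℚ) := by
  simp only [filter_gt_eq_Iio, filter_lt_eq_Ioi, vershik_summand_eq k p hp, sum_neg_distrib]
  have hresidues := Lagrange.two_mul_sum_prod_sub_div_prod_sub univ univ
    (cornerContent k p) (addableContent k p) (cornerContent_strictMono k p hp).injective.injOn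
    (by simp) (sum_addableContent k p)
  have hsq := sum_sq_addableContent_sub_sum_sq_cornerContent k p
  rw [hn]
  push_cast
  linarith

/-- Vershik's identity: for a partition of `n` with step representation
`(k₁,p₁,…,k_s,p_s)` (all `k_i, p_i ≥ 1`, with `n = Σ_{i≤j} k_i p_j`),
`Σ_j k_j p_j Π_{i<j}(1 + k_i/d(c_i,c_j)) Π_{i>j}(1 + p_i/d(c_j,c_i)) = n`. -/
theorem vershik_identity (s : ℕ) (k p : Fin s → ℕ)
    (hk : ∀ i, 1 ≤ k i) (hp : ∀ i, 1 ≤ p i) (n : ℕ)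
    (hn : n = ∑ j : Fin s, cornerRow k j * p j) :
    ∑ j : Fin s, (k j : ℚ) * (p j : ℚ)
        * (∏ i ∈ Finset.univ.filter (· < j), (1 + (k i : ℚ) / axialDist k p i j))
        * (∏ i ∈ Finset.univ.filter (j < ·), (1 + (p i : ℚ) / axialDist k p j i))
      = (n : ℚ) :=
  vershik_identity_general s k p hp n hn
end
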